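/- Let k ≥ l > 1 and let v ∈ V∖B be a vertex with l ≤ l_c. Then F_{k,l}^{vv} = ⋃_{w ∈ V, w ≠ v, (w,v) ∈ A} F_{k−1,l−1}^{vw}. -/

import Mathlib

/-!
Rotating the vertex list of a cycle through `v` so that `v` comes first turns the cycle into a
path from `v` to its predecessor `w` on the same vertices, one arc shorter; conversely the arc
`(w, v)` closes a path from `v` to `w` into a cycle through `v`. Exchanging one for the other in a
packing keeps `V(D)` and shifts `c(D)` by one. Feasibility transfers as well: a feasible cycle
avoids `B` and opens to a path of length `l - 1 ≤ l_c` avoiding `B`; a semi-feasible path starting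
at `v ∉ B` cannot be a feasible path, so it avoids `B`, and its closure is a feasible cycle
because `l ≤ l_c`.
-/

/-- An element of a path-cycle packing: a list of vertices together with a flag
telling whether it is a cycle (`true`) or a path (`false`). -/
structure PCElem (V : Type*) where
  verts : List V
  isCycle : Bool

/-- A valid element w.r.t. the arc relation `A`: the vertices are distinct,
consecutive vertices are joined by arcs, there are at least two vertices
(so paths have length ≥ 1 and cycles have length ≥ 2), and for a cycle the
last vertex is joined back to the first. -/
def ValidElem {V : Type*} (A : V → V → Prop) (e : PCElem V) : Prop :=
  e.verts.Nodup ∧ e.verts.Chain' A ∧ 2 ≤ e.verts.length ∧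
    (e.isCycle = true → ∀ h : e.verts ≠ [], A (e.verts.getLast h) (e.verts.head h))

/-- The length (number of arcs) of an element: a cycle on `k` vertices has length `k`,
a path on `k` vertices has length `k - 1`. -/
def elemLen {V : Type*} (e : PCElem V) : ℕ :=
  if e.isCycle then e.verts.length else e.verts.length - 1

/-- The vertex set of an element. -/
def elemVerts {V : Type*} [DecidableEq V] (e : PCElem V) : Finset V :=
  e.verts.toFinset

/-- A path-cycle packing: a finite set of valid, pairwise vertex-disjoint
paths and cycles. -/
def IsPacking {V : Type*} [DecidableEq V] (A : V → V → Prop)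
    (D : Finset (PCElem V)) : Prop :=
  (∀ e ∈ D, ValidElem A e) ∧
    (D : Set (PCElem V)).Pairwise fun e f => Disjoint (elemVerts e) (elemVerts f)

/-- `c(D)`: the total length of a packing. -/
def packLen {V : Type*} (D : Finset (PCElem V)) : ℕ :=
  ∑ e ∈ D, elemLen e

/-- `V(D)`: the set of vertices appearing in a packing. -/
def packVerts {V : Type*} [DecidableEq V] (D : Finset (PCElem V)) : Finset V :=
  D.biUnion elemVerts

/-- A feasible path: starts at an altruistic vertex of `B` and has length at most `lp`. -/
def FeasPath {V : Type*} (B : Set V) (lp : ℕ) (e : PCElem V) : Prop :=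
  e.isCycle = false ∧ (∃ b ∈ B, e.verts.head? = some b) ∧ e.verts.length - 1 ≤ lp

/-- A feasible cycle: contains no vertex of `B` and has length at most `lc`. -/
def FeasCycle {V : Type*} (B : Set V) (lc : ℕ) (e : PCElem V) : Prop :=
  e.isCycle = true ∧ (∀ w ∈ e.verts, w ∉ B) ∧ e.verts.length ≤ lc

/-- A feasible element: a feasible path or a feasible cycle. -/
def FeasElem {V : Type*} (B : Set V) (lp lc : ℕ) (e : PCElem V) : Prop :=
  FeasPath B lp e ∨ FeasCycle B lc e

/-- A feasible path-cycle packing. -/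
def FeasPacking {V : Type*} [DecidableEq V] (A : V → V → Prop) (B : Set V)
    (lp lc : ℕ) (D : Finset (PCElem V)) : Prop :=
  IsPacking A D ∧ ∀ e ∈ D, FeasElem B lp lc e

/-- A semi-feasible element: a feasible path, a feasible cycle, or a path of
length at most `lc` containing no vertex of `B`. -/
def SemiElem {V : Type*} (B : Set V) (lp lc : ℕ) (e : PCElem V) : Prop :=
  FeasElem B lp lc e ∨
    (e.isCycle = false ∧ (∀ w ∈ e.verts, w ∉ B) ∧ e.verts.length - 1 ≤ lc)

/-- `e` is a `D_l^{vu}`: a path of length `l` from `v` to `u` when `v ≠ u`, and a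
cycle of length `l` through `v` when `v = u`. -/
def IsDlvu {V : Type*} [DecidableEq V] (v u : V) (l : ℕ) (e : PCElem V) : Prop :=
  if v = u then
    e.isCycle = true ∧ v ∈ e.verts ∧ e.verts.length = l
  else
    e.isCycle = false ∧ e.verts.head? = some v ∧ e.verts.getLast? = some u ∧
      e.verts.length = l + 1

/-- `F_{k,l}^{vu}`: the collection of vertex sets `V(D)` over all semi-feasible
packings `D = P ∪ C ∪ {D_l^{vu}}` with `c(D) = k`; the distinguished element
`D_l^{vu}` is semi-feasible and every other element is feasible. -/
def FF {V : Type*} [DecidableEq V] (A : V → V → Prop) (B : Set V) (lp lc : ℕ)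
    (k l : ℕ) (v u : V) : Set (Finset V) :=
  { S | ∃ (D : Finset (PCElem V)) (e : PCElem V),
      IsPacking A D ∧ e ∈ D ∧ IsDlvu v u l e ∧ SemiElem B lp lc e ∧
      (∀ f ∈ D, f ≠ e → FeasElem B lp lc f) ∧ packLen D = k ∧ packVerts D = S }

/-- `F ⊎ T = { X ∪ T : X ∈ F, X ∩ T = ∅ }` for a collection of finite sets. -/
def uplusS {V : Type*} [DecidableEq V] (F : Set (Finset V)) (T : Finset V) :
    Set (Finset V) :=
  { Z | ∃ X ∈ F, Disjoint X T ∧ Z = X ∪ T }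

instance PCElem.instDecidableEq {V : Type*} [DecidableEq V] : DecidableEq (PCElem V) :=
  fun a b => decidable_of_iff (a.verts = b.verts ∧ a.isCycle = b.isCycle)
    (by cases a; cases b; simp)

section

variable {V : Type*} {A : V → V → Prop}

theorem Cycle.chain_coe_iff {L : List V} (hne : L ≠ []) :
    Cycle.Chain A (L : Cycle V) ↔ L.IsChain A ∧ A (L.getLast hne) (L.head hne) := by
  rw [Cycle.chain_ne_nil A hne, List.isChain_cons, List.head?_eq_some_head hne]
  simp only [Option.mem_def, Option.some.injEq, forall_eq', and_comm]

theorem List.exists_isRotated_cons_of_isChain {L : List V} (hne : L ≠ []) (hch : L.IsChain A)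
    (hclose : A (L.getLast hne) (L.head hne)) {v : V} (hv : v ∈ L) :
    ∃ t, L ~r v :: t ∧ (v :: t).IsChain A ∧ A ((v :: t).getLast (List.cons_ne_nil v t)) v := by
  obtain ⟨xs, ys, rfl⟩ := List.append_of_mem hv
  have hrot : xs ++ v :: ys ~r v :: (ys ++ xs) := List.isRotated_append
  have hcyc : Cycle.Chain A (v :: (ys ++ xs) : List V) := by
    rw [← Cycle.coe_eq_coe.mpr hrot]
    exact (Cycle.chain_coe_iff hne).mpr ⟨hch, hclose⟩
  exact ⟨ys ++ xs, hrot, (Cycle.chain_coe_iff (List.cons_ne_nil _ _)).mp hcyc⟩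

theorem List.getLast_cons_ne_self {v : V} {t : List V} (hnd : (v :: t).Nodup) (ht : t ≠ []) :
    (v :: t).getLast (List.cons_ne_nil v t) ≠ v := by
  rw [List.getLast_cons ht]
  exact fun h => (List.nodup_cons.mp hnd).1 (h ▸ List.getLast_mem ht)

namespace ValidElem

theorem verts_ne_nil {e : PCElem V} (he : ValidElem A e) : e.verts ≠ [] := by
  rintro h
  simpa [h] using he.2.2.1

theorem exists_isRotated_path {e : PCElem V} (he : ValidElem A e) (hc : e.isCycle = true)
    {v : V} (hv : v ∈ e.verts) :
    ∃ t, e.verts ~r v :: t ∧ ValidElem A ⟨v :: t, false⟩ ∧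
      A ((v :: t).getLast (List.cons_ne_nil v t)) v := by
  obtain ⟨t, hrot, hch, harc⟩ :=
    List.exists_isRotated_cons_of_isChain he.verts_ne_nil he.2.1 (he.2.2.2 hc he.verts_ne_nil) hv
  exact ⟨t, hrot, ⟨hrot.nodup_iff.mp he.1, hch, hrot.perm.length_eq ▸ he.2.2.1, nofun⟩, harc⟩

theorem close_path {f : PCElem V} (hf : ValidElem A f) {v w : V} (hv : f.verts.head? = some v)
    (hw : f.verts.getLast? = some w) (harc : A w v) : ValidElem A ⟨f.verts, true⟩ := by
  refine ⟨hf.1, hf.2.1, hf.2.2.1, fun _ hne => ?_⟩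
  rw [List.head?_eq_some_head hne, Option.some.injEq] at hv
  rw [List.getLast?_eq_some_getLast hne, Option.some.injEq] at hw
  rwa [hv, hw]

end ValidElem

section Semifeasible

variable {B : Set V} {lp lc : ℕ} {e : PCElem V}

theorem SemiElem.feasCycle (h : SemiElem B lp lc e) (hc : e.isCycle = true) :
    FeasCycle B lc e := by
  rcases h with (⟨hp, -⟩ | h) | ⟨hp, -⟩
  · simp [hp] at hc
  · exact h
  · simp [hp] at hc

theorem SemiElem.forall_not_mem_of_head (h : SemiElem B lp lc e) (hc : e.isCycle = false)
    {v : V} (hv : e.verts.head? = some v) (hvB : v ∉ B) : ∀ w ∈ e.verts, w ∉ B := by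
  rcases h with (⟨-, ⟨b, hbB, hb⟩, -⟩ | ⟨hc', -⟩) | ⟨-, h, -⟩
  · rw [hv, Option.some.injEq] at hb
    exact absurd (hb ▸ hbB) hvB
  · simp [hc'] at hc
  · exact h

end Semifeasible

section Replace

variable {e f : PCElem V}

theorem elemLen_le_packLen {D : Finset (PCElem V)} (he : e ∈ D) : elemLen e ≤ packLen D :=
  Finset.single_le_sum (fun _ _ => Nat.zero_le _) he

variable [DecidableEq V] {D : Finset (PCElem V)}

theorem ValidElem.elemVerts_nonempty (he : ValidElem A e) : (elemVerts e).Nonempty :=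
  List.toFinset_nonempty_iff _ |>.mpr he.verts_ne_nil

theorem IsPacking.not_mem_erase (hD : IsPacking A D) (he : e ∈ D) (hf : ValidElem A f)
    (hV : elemVerts f = elemVerts e) : f ∉ D.erase e := by
  intro hfD
  obtain ⟨hfe, hfD⟩ := Finset.mem_erase.mp hfD
  have hdisj : Disjoint (elemVerts f) (elemVerts f) := by
    simpa only [hV] using hD.2 hfD he hfe
  exact hf.elemVerts_nonempty.ne_empty (Finset.disjoint_self_iff_empty _ |>.mp hdisj)

theorem IsPacking.replace (hD : IsPacking A D) (he : e ∈ D) (hf : ValidElem A f)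
    (hV : elemVerts f = elemVerts e) : IsPacking A (insert f (D.erase e)) := by
  refine ⟨fun g hg => ?_, ?_⟩
  · rcases Finset.mem_insert.mp hg with rfl | hg
    · exact hf
    · exact hD.1 g (Finset.mem_of_mem_erase hg)
  · rw [Finset.coe_insert]
    refine (hD.2.mono (Finset.coe_subset.mpr (Finset.erase_subset e D))).insert fun g hg _ => ?_
    obtain ⟨hge, hgD⟩ := Finset.mem_erase.mp hg
    rw [hV]
    exact ⟨hD.2 he hgD hge.symm, hD.2 hgD he hge⟩

theorem packVerts_replace (he : e ∈ D) (hV : elemVerts f = elemVerts e) :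
    packVerts (insert f (D.erase e)) = packVerts D := by
  rw [packVerts, packVerts, Finset.biUnion_insert, hV, ← Finset.biUnion_insert,
    Finset.insert_erase he]

theorem packLen_replace (he : e ∈ D) (hf : f ∉ D.erase e) :
    packLen (insert f (D.erase e)) + elemLen e = packLen D + elemLen f := by
  rw [packLen, Finset.sum_insert hf, add_assoc, Finset.sum_erase_add D _ he, add_comm]
  rfl

theorem mem_FF_of_replace {B : Set V} {lp lc k l : ℕ} {v u : V} (hD : IsPacking A D)
    (he : e ∈ D) (hothers : ∀ g ∈ D, g ≠ e → FeasElem B lp lc g) (hf : ValidElem A f)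
    (hV : elemVerts f = elemVerts e) (hfD : IsDlvu v u l f) (hfS : SemiElem B lp lc f)
    -- additive form of `k = c(D) - elemLen e + elemLen f`, free of truncated subtraction
    (hk : packLen D + elemLen f = k + elemLen e) :
    packVerts D ∈ FF A B lp lc k l v u := by
  refine ⟨insert f (D.erase e), f, hD.replace he hf hV, Finset.mem_insert_self f _, hfD, hfS,
    fun g hg hgf => ?_, ?_, packVerts_replace he hV⟩
  · obtain ⟨hge, hgD⟩ := Finset.mem_erase.mp ((Finset.mem_insert.mp hg).resolve_left hgf)
    exact hothers g hgD hge
  · have := packLen_replace he (hD.not_mem_erase he hf hV)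
    omega

end Replace

section Recurrence

variable [DecidableEq V] {B : Set V} {lp lc k l : ℕ} {v : V} {S : Finset V}

theorem exists_mem_FF_path_of_mem_FF_cycle (hS : S ∈ FF A B lp lc k l v v) :
    ∃ w, w ≠ v ∧ A w v ∧ S ∈ FF A B lp lc (k - 1) (l - 1) v w := by
  obtain ⟨D, e, hD, heD, hDl, hSemi, hothers, rfl, rfl⟩ := hS
  rw [IsDlvu, if_pos rfl] at hDl
  obtain ⟨hc, hv, hlen⟩ := hDl
  have he := hD.1 e heD
  obtain ⟨t, hrot, hf, harc⟩ := he.exists_isRotated_path hc hv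
  have hlen' : (v :: t).length = l := hrot.perm.length_eq ▸ hlen
  have hl : 2 ≤ l := hlen ▸ he.2.2.1
  have hwv := List.getLast_cons_ne_self hf.1 (by rintro rfl; simpa using hf.2.2.1)
  obtain ⟨-, hnB, hlc⟩ := hSemi.feasCycle hc
  have hle : elemLen e ≤ packLen D := elemLen_le_packLen heD
  refine ⟨_, hwv, harc, mem_FF_of_replace hD heD hothers hf ?_ ?_ ?_ ?_⟩
  · exact List.toFinset_eq_of_perm _ _ hrot.perm.symm
  · rw [IsDlvu, if_neg (Ne.symm hwv)]
    exact ⟨rfl, rfl, List.getLast?_eq_some_getLast _, by rw [hlen']; omega⟩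
  · exact Or.inr ⟨rfl, fun x hx => hnB x (hrot.mem_iff.mpr hx), by rw [hlen']; omega⟩
  · simp only [elemLen, hc, if_true, Bool.false_eq_true, if_false] at hle ⊢
    omega

theorem mem_FF_cycle_of_mem_FF_path (hvB : v ∉ B) (hlc : l ≤ lc) {w : V} (hwv : w ≠ v)
    (harc : A w v) (hS : S ∈ FF A B lp lc (k - 1) (l - 1) v w) : S ∈ FF A B lp lc k l v v := by
  obtain ⟨D, f, hD, hfD, hDl, hSemi, hothers, hk, rfl⟩ := hS
  rw [IsDlvu, if_neg (Ne.symm hwv)] at hDl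
  obtain ⟨hp, hv, hw, hlen⟩ := hDl
  have hf := hD.1 f hfD
  have hle : elemLen f ≤ packLen D := elemLen_le_packLen hfD
  have hnB := hSemi.forall_not_mem_of_head hp hv hvB
  have hlen2 : 2 ≤ f.verts.length := hf.2.2.1
  refine mem_FF_of_replace (f := ⟨f.verts, true⟩) hD hfD hothers (hf.close_path hv hw harc) rfl
    ?_ ?_ ?_
  · rw [IsDlvu, if_pos rfl]
    exact ⟨rfl, List.mem_of_mem_head? hv, by dsimp only; omega⟩
  · exact Or.inl (Or.inr ⟨rfl, hnB, by dsimp only; omega⟩)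
  · simp only [elemLen, hp, if_true, Bool.false_eq_true, if_false] at hle ⊢
    omega

end Recurrence

end

theorem FF_recurrence_close_cycle_general {V : Type*} [DecidableEq V]
    (A : V → V → Prop) (B : Set V) (lp lc : ℕ)
    (k l : ℕ) (v : V) (hvB : v ∉ B) (hlc : l ≤ lc) :
    FF A B lp lc k l v v =
      ⋃ (w : V) (_ : w ≠ v) (_ : A w v), FF A B lp lc (k - 1) (l - 1) v w := by
  ext S
  simp only [Set.mem_iUnion, exists_prop]
  exact ⟨exists_mem_FF_path_of_mem_FF_cycle,
    fun ⟨_, hwv, harc, hS⟩ => mem_FF_cycle_of_mem_FF_path hvB hlc hwv harc hS⟩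

/-- (Case (iv) of the DP recurrence) For `k ≥ l > 1` and a vertex `v ∉ B` with
`l ≤ l_c`: `F_{k,l}^{vv} = ⋃_{w ≠ v, (w,v) ∈ A} F_{k-1,l-1}^{vw}`. -/
theorem FF_recurrence_close_cycle {V : Type*} [Fintype V] [DecidableEq V]
    (A : V → V → Prop) (B : Set V) (lp lc : ℕ)
    (hloop : ∀ v, ¬ A v v) (hB : ∀ v u, A v u → u ∉ B)
    (k l : ℕ) (v : V) (hkl : l ≤ k) (hl : 1 < l) (hvB : v ∉ B) (hlc : l ≤ lc) :
    FF A B lp lc k l v v =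
      ⋃ (w : V) (_ : w ≠ v) (_ : A w v), FF A B lp lc (k - 1) (l - 1) v w :=
  FF_recurrence_close_cycle_general A B lp lc k l v hvB hlc
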